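/- Let 0 < ε ≤ 1 and let Ext: {0,1}^{n_1}×{0,1}^{n_2} → {0,1}^m be a (k_1,k_2,ε) two-source extractor. Then Ext is a (k_1+log₂(1/ε), k_2+log₂(1/ε), 3ε) classical-proof two-source extractor in the Markov model; that is, for every joint distribution of (X_1,X_2,Z) with Z a finite random variable, X_i taking values in {0,1}^{n_i}, such that X_1 and X_2 are conditionally independent given Z, H_min(X_1|Z) ≥ k_1 + log₂(1/ε) and H_min(X_2|Z) ≥ k_2 + log₂(1/ε), one has (1/2)∑_{y∈{0,1}^m, z} |Pr[Ext(X_1,X_2)=y, Z=z] − 2^{−m}·Pr[Z=z]| ≤ 3ε. -/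

import Mathlib

/-!
Conditioned on `Z = z`, the sources are independent, so whenever both conditional distributions
have max-probability at most `2^{-kᵢ}` the extractor is `ε`-close to uniform on that slice. By
Markov's inequality applied to the conditional guessing probabilities, the slices where this fails
carry total mass at most `2ε`; they contribute at most twice their mass to the distance, which
gives `ε + 2ε = 3ε`.
-/

open Finset

section

variable {α β γ : Type*} [Fintype α] [Fintype β] [DecidableEq γ]

def outputMass (f : α → β → γ) (w : α → β → ℝ) (y : γ) : ℝ :=
  ∑ x ∈ univ.filter (fun x : α × β => f x.1 x.2 = y), w x.1 x.2

lemma sum_outputMass [Fintype γ] (f : α → β → γ) (w : α → β → ℝ) :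
    ∑ y, outputMass f w y = ∑ a, ∑ b, w a b :=
  (sum_fiberwise _ _ _).trans (Fintype.sum_prod_type _)

lemma outputMass_const_mul (f : α → β → γ) (c : ℝ) (w : α → β → ℝ) (y : γ) :
    outputMass f (fun a b => c * w a b) y = c * outputMass f w y := by
  simp only [outputMass, mul_sum]

lemma sum_abs_outputMass_sub_le_two_mul [Fintype γ] (f : α → β → γ) {w : α → β → ℝ}
    (hw : ∀ a b, 0 ≤ w a b) :
    ∑ y, |outputMass f w y - (Fintype.card γ : ℝ)⁻¹ * ∑ a, ∑ b, w a b|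
      ≤ 2 * ∑ a, ∑ b, w a b := by
  set t := ∑ a, ∑ b, w a b
  have ht : 0 ≤ t := sum_nonneg fun a _ => sum_nonneg fun b _ => hw a b
  have hu : 0 ≤ (Fintype.card γ : ℝ)⁻¹ * t := by positivity
  calc ∑ y, |outputMass f w y - (Fintype.card γ : ℝ)⁻¹ * t|
      ≤ ∑ y, (outputMass f w y + (Fintype.card γ : ℝ)⁻¹ * t) := by
        refine sum_le_sum fun y _ => (abs_sub _ _).trans_eq ?_
        rw [abs_of_nonneg (sum_nonneg fun x _ => hw x.1 x.2), abs_of_nonneg hu]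
    _ = t + (Fintype.card γ * (Fintype.card γ : ℝ)⁻¹) * t := by
        rw [sum_add_distrib, sum_outputMass, sum_const, card_univ, nsmul_eq_mul, mul_assoc]
    _ ≤ t + 1 * t := by gcongr; exact mul_inv_le_one
    _ = 2 * t := by ring

def IsTwoSourceExtractor [Fintype γ] (f : α → β → γ) (k1 k2 ε : ℝ) : Prop :=
  ∀ (p1 : α → ℝ) (p2 : β → ℝ), (∀ a, 0 ≤ p1 a) → (∀ b, 0 ≤ p2 b) →
    ∑ a, p1 a = 1 → ∑ b, p2 b = 1 → (∀ a, p1 a ≤ 2 ^ (-k1)) → (∀ b, p2 b ≤ 2 ^ (-k2)) →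
    1 / 2 * ∑ y, |outputMass f (fun a b => p1 a * p2 b) y - (Fintype.card γ : ℝ)⁻¹| ≤ ε

/-- `hprod` says that `w` is its total mass times the product of its normalized marginals, so the
extractor applies to those marginals after rescaling. -/
lemma IsTwoSourceExtractor.sum_abs_outputMass_sub_le [Fintype γ] {f : α → β → γ} {k1 k2 ε : ℝ}
    (hf : IsTwoSourceExtractor f k1 k2 ε) {w : α → β → ℝ} (hw : ∀ a b, 0 ≤ w a b)
    (hprod : ∀ a b, w a b * ∑ a', ∑ b', w a' b' = (∑ b', w a b') * ∑ a', w a' b)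
    (h1 : ∀ a, ∑ b, w a b ≤ 2 ^ (-k1) * ∑ a', ∑ b', w a' b')
    (h2 : ∀ b, ∑ a, w a b ≤ 2 ^ (-k2) * ∑ a', ∑ b', w a' b') :
    ∑ y, |outputMass f w y - (Fintype.card γ : ℝ)⁻¹ * ∑ a, ∑ b, w a b|
      ≤ 2 * ε * ∑ a, ∑ b, w a b := by
  have hcrude := sum_abs_outputMass_sub_le_two_mul f hw
  generalize ht_def : ∑ a, ∑ b, w a b = t at *
  have ht0 : 0 ≤ t := ht_def ▸ sum_nonneg fun a _ => sum_nonneg fun b _ => hw a b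
  rcases ht0.eq_or_lt with rfl | ht
  · linarith
  set p1 : α → ℝ := fun a => (∑ b, w a b) / t
  set p2 : β → ℝ := fun b => (∑ a, w a b) / t
  have hw_eq : w = fun a b => t * (p1 a * p2 b) := by
    funext a b
    simp only [p1, p2]
    field_simp
    linear_combination hprod a b
  have hext := hf p1 p2
    (fun a => div_nonneg (sum_nonneg fun b _ => hw a b) ht.le)
    (fun b => div_nonneg (sum_nonneg fun a _ => hw a b) ht.le)
    (by rw [← sum_div, ht_def, div_self ht.ne'])
    (by rw [← sum_div, sum_comm, ht_def, div_self ht.ne'])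
    (fun a => (div_le_iff₀ ht).2 (h1 a)) (fun b => (div_le_iff₀ ht).2 (h2 b))
  calc ∑ y, |outputMass f w y - (Fintype.card γ : ℝ)⁻¹ * t|
      = ∑ y, t * |outputMass f (fun a b => p1 a * p2 b) y - (Fintype.card γ : ℝ)⁻¹| := by
        refine sum_congr rfl fun y _ => ?_
        rw [hw_eq, outputMass_const_mul, mul_comm _ t, ← mul_sub, abs_mul, abs_of_pos ht]
    _ = t * ∑ y, |outputMass f (fun a b => p1 a * p2 b) y - (Fintype.card γ : ℝ)⁻¹| :=
        (mul_sum _ _ _).symm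
    _ ≤ t * (2 * ε) := by gcongr; linarith
    _ = 2 * ε * t := by ring

end

/-- Markov's inequality for each of the two conditions, plus a union bound. -/
lemma sum_filter_not_and_le {Z : Type*} [Fintype Z] {P M1 M2 : Z → ℝ} {δ1 δ2 ε : ℝ}
    (hδ1 : 0 < δ1) (hδ2 : 0 < δ2) (hM1 : ∀ z, 0 ≤ M1 z) (hM2 : ∀ z, 0 ≤ M2 z)
    (h1 : ∑ z, M1 z ≤ ε * δ1) (h2 : ∑ z, M2 z ≤ ε * δ2) :
    ∑ z ∈ univ.filter (fun z => ¬(M1 z ≤ δ1 * P z ∧ M2 z ≤ δ2 * P z)), P z ≤ 2 * ε := by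
  have hbad : ∀ z, ¬(M1 z ≤ δ1 * P z ∧ M2 z ≤ δ2 * P z) → P z ≤ M1 z / δ1 + M2 z / δ2 := by
    intro z hz
    have e1 := div_nonneg (hM1 z) hδ1.le
    have e2 := div_nonneg (hM2 z) hδ2.le
    rcases not_and_or.1 hz with hz | hz
    · have := (lt_div_iff₀' hδ1).2 (not_le.1 hz); linarith
    · have := (lt_div_iff₀' hδ2).2 (not_le.1 hz); linarith
  calc ∑ z ∈ univ.filter (fun z => ¬(M1 z ≤ δ1 * P z ∧ M2 z ≤ δ2 * P z)), P z
      ≤ ∑ z ∈ univ.filter (fun z => ¬(M1 z ≤ δ1 * P z ∧ M2 z ≤ δ2 * P z)),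
          (M1 z / δ1 + M2 z / δ2) :=
        sum_le_sum fun z hz => hbad z (mem_filter.1 hz).2
    _ ≤ ∑ z, (M1 z / δ1 + M2 z / δ2) :=
        sum_le_sum_of_subset_of_nonneg (subset_univ _) fun z _ _ =>
          add_nonneg (div_nonneg (hM1 z) hδ1.le) (div_nonneg (hM2 z) hδ2.le)
    _ = (∑ z, M1 z) / δ1 + (∑ z, M2 z) / δ2 := by rw [sum_add_distrib, sum_div, sum_div]
    _ ≤ ε * δ1 / δ1 + ε * δ2 / δ2 := by gcongr
    _ = 2 * ε := by field_simp; ring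

lemma Real.rpow_neg_add_logb_one_div {b : ℝ} (hb : 0 < b) (hb1 : b ≠ 1) (k : ℝ) {ε : ℝ}
    (hε : 0 < ε) : b ^ (-(k + Real.logb b (1 / ε))) = ε * b ^ (-k) := by
  rw [neg_add, Real.rpow_add hb, one_div, Real.logb_inv, neg_neg, Real.rpow_logb hb hb1 hε,
    mul_comm]

theorem IsTwoSourceExtractor.markov_error_le {α β γ Z : Type*} [Fintype α] [Fintype β]
    [Fintype γ] [DecidableEq γ] [Fintype Z] [Nonempty α] [Nonempty β] {f : α → β → γ}
    {k1 k2 ε : ℝ} (hf : IsTwoSourceExtractor f k1 k2 ε) {q : α → β → Z → ℝ}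
    (hq : ∀ a b z, 0 ≤ q a b z) (hsum : ∑ a, ∑ b, ∑ z, q a b z = 1)
    (hindep : ∀ a b z, q a b z * (∑ a', ∑ b', q a' b' z) = (∑ b', q a b' z) * ∑ a', q a' b z)
    (hH1 : ∑ z, univ.sup' univ_nonempty (fun a => ∑ b, q a b z) ≤ ε * 2 ^ (-k1))
    (hH2 : ∑ z, univ.sup' univ_nonempty (fun b => ∑ a, q a b z) ≤ ε * 2 ^ (-k2)) :
    1 / 2 * ∑ y, ∑ z, |outputMass f (fun a b => q a b z) y
        - (Fintype.card γ : ℝ)⁻¹ * ∑ a, ∑ b, q a b z| ≤ 3 * ε := by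
  classical
  set P : Z → ℝ := fun z => ∑ a, ∑ b, q a b z
  set M1 : Z → ℝ := fun z => univ.sup' univ_nonempty (fun a => ∑ b, q a b z)
  set M2 : Z → ℝ := fun z => univ.sup' univ_nonempty (fun b => ∑ a, q a b z)
  set good : Z → Prop := fun z => M1 z ≤ 2 ^ (-k1) * P z ∧ M2 z ≤ 2 ^ (-k2) * P z
  have hP : ∀ z, 0 ≤ P z := fun z => sum_nonneg fun a _ => sum_nonneg fun b _ => hq a b z
  have hM1 : ∀ z, 0 ≤ M1 z := fun z =>
    (sum_nonneg fun b _ => hq _ b z).trans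
      (le_sup' (fun a => ∑ b, q a b z) (mem_univ (Classical.arbitrary α)))
  have hM2 : ∀ z, 0 ≤ M2 z := fun z =>
    (sum_nonneg fun a _ => hq a _ z).trans
      (le_sup' (fun b => ∑ a, q a b z) (mem_univ (Classical.arbitrary β)))
  have hε : 0 ≤ ε := nonneg_of_mul_nonneg_left ((sum_nonneg fun z _ => hM1 z).trans hH1)
    (by positivity)
  have hP_sum : ∑ z, P z = 1 := by
    rw [← hsum, sum_comm]
    exact sum_congr rfl fun a _ => sum_comm
  have hgood_mass : ∑ z ∈ univ.filter good, P z ≤ 1 :=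
    hP_sum ▸ sum_le_sum_of_subset_of_nonneg (subset_univ _) fun z _ _ => hP z
  have hbad_mass : ∑ z ∈ univ.filter (fun z => ¬good z), P z ≤ 2 * ε :=
    sum_filter_not_and_le (by positivity) (by positivity) hM1 hM2 hH1 hH2
  rw [sum_comm, ← sum_filter_add_sum_filter_not univ good]
  calc 1 / 2 * (∑ z ∈ univ.filter good, ∑ y, |outputMass f (fun a b => q a b z) y
          - (Fintype.card γ : ℝ)⁻¹ * P z|
        + ∑ z ∈ univ.filter (fun z => ¬good z), ∑ y, |outputMass f (fun a b => q a b z) y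
          - (Fintype.card γ : ℝ)⁻¹ * P z|)
      ≤ 1 / 2 * (∑ z ∈ univ.filter good, 2 * ε * P z
        + ∑ z ∈ univ.filter (fun z => ¬good z), 2 * P z) := by
        gcongr with z hz z
        · have hz := (mem_filter.1 hz).2
          exact hf.sum_abs_outputMass_sub_le (fun a b => hq a b z) (fun a b => hindep a b z)
            (fun a => (le_sup' _ (mem_univ a)).trans hz.1)
            (fun b => (le_sup' _ (mem_univ b)).trans hz.2)
        · exact sum_abs_outputMass_sub_le_two_mul f fun a b => hq a b z
    _ = ε * ∑ z ∈ univ.filter good, P z + ∑ z ∈ univ.filter (fun z => ¬good z), P z := by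
        rw [← mul_sum, ← mul_sum]; ring
    _ ≤ ε * 1 + 2 * ε := by gcongr
    _ = 3 * ε := by ring

theorem two_source_extractor_classical_markov_general
    (n1 n2 m : ℕ) (Ext : (Fin n1 → Bool) → (Fin n2 → Bool) → Fin m → Bool)
    (k1 k2 ε : ℝ) (hε0 : 0 < ε)
    -- `Ext` is a `(k₁,k₂,ε)` two-source extractor:
    (hExt : ∀ (p1 : (Fin n1 → Bool) → ℝ) (p2 : (Fin n2 → Bool) → ℝ),
      (∀ x1, 0 ≤ p1 x1) → (∀ x2, 0 ≤ p2 x2) →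
      (∑ x1, p1 x1) = 1 → (∑ x2, p2 x2) = 1 →
      Finset.univ.sup' Finset.univ_nonempty p1 ≤ (2:ℝ) ^ (-k1) →
      Finset.univ.sup' Finset.univ_nonempty p2 ≤ (2:ℝ) ^ (-k2) →
      (1/2) * ∑ y : Fin m → Bool,
        |(∑ x ∈ Finset.univ.filter
            (fun x : (Fin n1 → Bool) × (Fin n2 → Bool) => Ext x.1 x.2 = y),
            p1 x.1 * p2 x.2) - ((2:ℝ)^m)⁻¹| ≤ ε) :
    -- then it is a classical-proof two-source extractor in the Markov model:
    ∀ (Z : Type) [Fintype Z],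
    ∀ q : (Fin n1 → Bool) → (Fin n2 → Bool) → Z → ℝ,
      (∀ x1 x2 z, 0 ≤ q x1 x2 z) →
      (∑ x1, ∑ x2, ∑ z, q x1 x2 z) = 1 →
      -- `X₁` and `X₂` are conditionally independent given `Z`
      (∀ x1 x2 z, q x1 x2 z * (∑ x1', ∑ x2', q x1' x2' z)
        = (∑ x2', q x1 x2' z) * (∑ x1', q x1' x2 z)) →
      -- `H_min(X_i | Z) ≥ k_i + log₂(1/ε)`
      (∑ z, Finset.univ.sup' Finset.univ_nonempty (fun x1 => ∑ x2, q x1 x2 z)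
        ≤ (2:ℝ) ^ (-(k1 + Real.logb 2 (1/ε)))) →
      (∑ z, Finset.univ.sup' Finset.univ_nonempty (fun x2 => ∑ x1, q x1 x2 z)
        ≤ (2:ℝ) ^ (-(k2 + Real.logb 2 (1/ε)))) →
      (1/2) * ∑ y : Fin m → Bool, ∑ z,
        |(∑ x ∈ Finset.univ.filter
            (fun x : (Fin n1 → Bool) × (Fin n2 → Bool) => Ext x.1 x.2 = y),
            q x.1 x.2 z)
          - ((2:ℝ)^m)⁻¹ * ∑ x1, ∑ x2, q x1 x2 z|
        ≤ 3 * ε := by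
  intro Z _ q hq hsum hindep hH1 hH2
  have hf : IsTwoSourceExtractor Ext k1 k2 ε := fun p1 p2 hp1 hp2 hs1 hs2 hm1 hm2 => by
    simpa [outputMass] using
      hExt p1 p2 hp1 hp2 hs1 hs2 (sup'_le _ _ fun a _ => hm1 a) (sup'_le _ _ fun b _ => hm2 b)
  rw [Real.rpow_neg_add_logb_one_div two_pos (by norm_num) _ hε0] at hH1 hH2
  simpa [outputMass] using hf.markov_error_le hq hsum hindep hH1 hH2

theorem two_source_extractor_classical_markov
    (n1 n2 m : ℕ) (Ext : (Fin n1 → Bool) → (Fin n2 → Bool) → Fin m → Bool)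
    (k1 k2 ε : ℝ) (hε0 : 0 < ε) (hε1 : ε ≤ 1)
    -- `Ext` is a `(k₁,k₂,ε)` two-source extractor:
    (hExt : ∀ (p1 : (Fin n1 → Bool) → ℝ) (p2 : (Fin n2 → Bool) → ℝ),
      (∀ x1, 0 ≤ p1 x1) → (∀ x2, 0 ≤ p2 x2) →
      (∑ x1, p1 x1) = 1 → (∑ x2, p2 x2) = 1 →
      Finset.univ.sup' Finset.univ_nonempty p1 ≤ (2:ℝ) ^ (-k1) →
      Finset.univ.sup' Finset.univ_nonempty p2 ≤ (2:ℝ) ^ (-k2) →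
      (1/2) * ∑ y : Fin m → Bool,
        |(∑ x ∈ Finset.univ.filter
            (fun x : (Fin n1 → Bool) × (Fin n2 → Bool) => Ext x.1 x.2 = y),
            p1 x.1 * p2 x.2) - ((2:ℝ)^m)⁻¹| ≤ ε) :
    -- then it is a classical-proof two-source extractor in the Markov model:
    ∀ (Z : Type) [Fintype Z],
    ∀ q : (Fin n1 → Bool) → (Fin n2 → Bool) → Z → ℝ,
      (∀ x1 x2 z, 0 ≤ q x1 x2 z) →
      (∑ x1, ∑ x2, ∑ z, q x1 x2 z) = 1 →
      -- `X₁` and `X₂` are conditionally independent given `Z`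
      (∀ x1 x2 z, q x1 x2 z * (∑ x1', ∑ x2', q x1' x2' z)
        = (∑ x2', q x1 x2' z) * (∑ x1', q x1' x2 z)) →
      -- `H_min(X_i | Z) ≥ k_i + log₂(1/ε)`
      (∑ z, Finset.univ.sup' Finset.univ_nonempty (fun x1 => ∑ x2, q x1 x2 z)
        ≤ (2:ℝ) ^ (-(k1 + Real.logb 2 (1/ε)))) →
      (∑ z, Finset.univ.sup' Finset.univ_nonempty (fun x2 => ∑ x1, q x1 x2 z)
        ≤ (2:ℝ) ^ (-(k2 + Real.logb 2 (1/ε)))) →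
      (1/2) * ∑ y : Fin m → Bool, ∑ z,
        |(∑ x ∈ Finset.univ.filter
            (fun x : (Fin n1 → Bool) × (Fin n2 → Bool) => Ext x.1 x.2 = y),
            q x.1 x.2 z)
          - ((2:ℝ)^m)⁻¹ * ∑ x1, ∑ x2, q x1 x2 z|
        ≤ 3 * ε :=
  two_source_extractor_classical_markov_general n1 n2 m Ext k1 k2 ε hε0 hExt
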